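/- arXiv:1212.1392 — 5 statements merged into one kernel-verified Lean document; each statement's English description precedes it below -/
import Mathlib

section
/- Let p be an odd prime number with p ≥ e^7 and let x1 be a positive integer with x1^2 < p. Then p does not divide the class number h(ℚ(√(x1^2 − p))) of the imaginary quadratic field ℚ(√(x1^2 − p)). -/
/-!
The class number is in fact smaller than `p`. Minkowski's bound puts an integral ideal of norm at
most `(2/π)√|d_K|` in every ideal class of a quadratic field `K`, and here
`|d_K| ≤ 4 (p - x1²) ≤ 4p`. Writing `𝓞_K = ℤ ⊕ ℤθ`, every nonzero ideal is
`d · (aℤ + (c + θ)ℤ)` with `0 ≤ c < a` and `d a` dividing its norm (a Hermite normal form); as `d`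
is principal, the class only depends on `(a, c)`. With `N = ⌊(4/π)√p⌋` this gives
`2h ≤ N (N + 1) < 2p`, the last step as soon as `p ≥ 16`.
-/

open NumberField Module
open scoped nonZeroDivisors

theorem Module.exists_basis_fin_two_zero_eq_one {S : Type*} [CommRing S] [Module.Free ℤ S]
    [Module.Finite ℤ S] (h : finrank ℤ S = 2) : ∃ B : Basis (Fin 2) ℤ S, B 0 = 1 := by
  let b := Module.finBasisOfFinrankEq ℤ S h
  set u := b.repr 1 0
  set v := b.repr 1 1
  have hsum : u • b 0 + v • b 1 = 1 := by simpa [Fin.sum_univ_two] using b.sum_repr 1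
  have hcop : IsCoprime u v := by
    rw [Int.isCoprime_iff_gcd_eq_one]
    set g := Int.gcd u v
    obtain ⟨u', hu'⟩ : (g : ℤ) ∣ u := Int.gcd_dvd_left u v
    obtain ⟨v', hv'⟩ : (g : ℤ) ∣ v := Int.gcd_dvd_right u v
    have hg : algebraMap ℤ S g * (u' • b 0 + v' • b 1) = 1 := by
      rw [← Algebra.smul_def, ← hsum, hu', hv', mul_smul, mul_smul, smul_add]
    -- `g` is a unit of `S`, hence its norm `g ^ 2` is a unit of `ℤ`
    have hnorm := congrArg (Algebra.norm ℤ) hg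
    rw [map_mul, Algebra.norm_algebraMap, h, (Algebra.norm ℤ).map_one] at hnorm
    have : (g : ℤ) ^ 2 = 1 := Int.eq_one_of_mul_eq_one_right (by positivity) hnorm
    exact_mod_cast pow_eq_one_iff_of_nonneg (Int.natCast_nonneg g) two_ne_zero |>.mp this
  obtain ⟨x, y, hxy⟩ := hcop
  let M : Matrix (Fin 2) (Fin 2) ℤ := !![u, -y; v, x]
  have hM : IsUnit M.det := by
    rw [Matrix.det_fin_two_of, show u * x - -y * v = 1 by linear_combination hxy]
    exact isUnit_one
  refine ⟨b.map (Matrix.toLinearEquiv b M hM), ?_⟩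
  simpa [Matrix.toLin_self, Fin.sum_univ_two, M, zsmul_eq_mul] using hsum

lemma Int.mem_ideal_iff_absNorm_dvd {J : Ideal ℤ} {m : ℤ} : m ∈ J ↔ (Ideal.absNorm J : ℤ) ∣ m := by
  rw [← Ideal.mem_span_singleton, Int.ideal_span_absNorm_eq_self]

namespace Module.Basis

variable {S : Type*} [CommRing S] {B : Basis (Fin 2) ℤ S}

lemma eq_coord_zero_add_coord_one_mul (hB : B 0 = 1) (x : S) :
    x = B.coord 0 x + B.coord 1 x * B 1 := by
  conv_lhs => rw [← B.sum_repr x]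
  simp [Fin.sum_univ_two, hB, zsmul_eq_mul]

lemma coord_intCast (hB : B 0 = 1) (m : ℤ) (i : Fin 2) :
    B.coord i m = if i = 0 then m else 0 := by
  rw [← mul_one (m : S), ← zsmul_eq_mul, ← hB, map_zsmul, Basis.coord_apply, Basis.repr_self]
  fin_cases i <;> simp

lemma natCast_ne_zero (hB : B 0 = 1) {n : ℕ} (hn : n ≠ 0) : (n : S) ≠ 0 := fun h => by
  have := congrArg (B.coord 0) (show ((n : ℤ) : S) = 0 by exact_mod_cast h)
  rw [B.coord_intCast hB, map_zero] at this
  exact hn (by simpa using this)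

lemma coord_intCast_mul (m : ℤ) (x : S) (i : Fin 2) : B.coord i (m * x) = m * B.coord i x := by
  rw [← zsmul_eq_mul, map_zsmul, smul_eq_mul]

end Module.Basis

namespace Ideal

variable {S : Type*} [CommRing S] {B : Basis (Fin 2) ℤ S}

lemma restrictScalars_eq_span_pair (hB : B 0 = 1) (I : Ideal S) {α : ℤ} {ξ : S}
    (hα : ∀ m : ℤ, (m : S) ∈ I ↔ α ∣ m) (hξ : ξ ∈ I) (hdvd : ∀ x ∈ I, B.coord 1 ξ ∣ B.coord 1 x) :
    I.restrictScalars ℤ = Submodule.span ℤ {(α : S), ξ} := by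
  apply le_antisymm
  · intro x hx
    obtain ⟨k, hk⟩ := hdvd x hx
    have hy : x - k * ξ ∈ I := I.sub_mem hx (I.mul_mem_left _ hξ)
    have hy1 : B.coord 1 (x - k * ξ) = 0 := by
      rw [map_sub, B.coord_intCast_mul, hk, mul_comm, sub_self]
    have hxy := B.eq_coord_zero_add_coord_one_mul hB (x - k * ξ)
    rw [hy1, Int.cast_zero, zero_mul, add_zero] at hxy
    obtain ⟨m, hm⟩ := (hα _).mp (hxy ▸ hy)
    refine Submodule.mem_span_pair.mpr ⟨m, k, ?_⟩
    rw [hm] at hxy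
    simp only [zsmul_eq_mul]
    push_cast at hxy
    linear_combination -hxy
  · rw [Submodule.span_le, Set.insert_subset_iff, Set.singleton_subset_iff]
    exact ⟨(hα α).mpr dvd_rfl, hξ⟩

lemma dvd_of_intCast_add_mul_mem {I : Ideal S} {δ m : ℤ} {y : S}
    (hδ : ∀ x ∈ I, δ ∣ B.coord 1 x) (hm : (m : S) + δ * y ∈ I) : δ ∣ m := by
  have h := hδ _ (I.mul_mem_left (B 1) hm)
  rw [show B 1 * (m + δ * y) = m * B 1 + δ * (B 1 * y) by ring, map_add, B.coord_intCast_mul,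
    B.coord_intCast_mul] at h
  simpa using (dvd_add_left (dvd_mul_right _ _)).mp h

lemma exists_restrictScalars_eq_span_pair (hB : B 0 = 1) (I : Ideal S)
    (hI : I.comap (algebraMap ℤ S) ≠ ⊥) :
    ∃ d a c : ℕ, 0 < d ∧ c < a ∧ (∀ m : ℤ, (m : S) ∈ I ↔ (d * a : ℤ) ∣ m) ∧
      I.restrictScalars ℤ = Submodule.span ℤ {(d : S) * a, d * (c + B 1)} := by
  set α := absNorm (I.comap (algebraMap ℤ S))
  have hα (m : ℤ) : (m : S) ∈ I ↔ (α : ℤ) ∣ m := by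
    rw [← Int.mem_ideal_iff_absNorm_dvd, mem_comap, eq_intCast]
  have hα0 : α ≠ 0 := absNorm_eq_zero_iff.not.mpr hI
  have hαI : ((α : ℤ) : S) ∈ I := (hα α).mpr dvd_rfl
  set D : Ideal ℤ := (I.restrictScalars ℤ).map (B.coord 1)
  set δ := absNorm D
  have hδ (x) (hx : x ∈ I) : (δ : ℤ) ∣ B.coord 1 x :=
    Int.mem_ideal_iff_absNorm_dvd.mp (Submodule.mem_map_of_mem hx)
  obtain ⟨ξ, hξI, hξ⟩ : ∃ ξ ∈ I, B.coord 1 ξ = δ :=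
    Submodule.mem_map.mp (Int.mem_ideal_iff_absNorm_dvd (J := D).mpr dvd_rfl)
  set c₀ := B.coord 0 ξ % α
  set ξ' := ξ - (B.coord 0 ξ / α : ℤ) * ((α : ℤ) : S)
  have hξ' : ξ' = c₀ + (δ : ℤ) * B 1 := by
    have h := B.eq_coord_zero_add_coord_one_mul hB ξ
    rw [hξ, ← Int.emod_add_mul_ediv (B.coord 0 ξ) α] at h
    simp only [ξ', c₀]
    push_cast at h ⊢
    linear_combination h
  have hξ'I : ξ' ∈ I := I.sub_mem hξI (I.mul_mem_left _ hαI)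
  have hξ'1 : B.coord 1 ξ' = δ := by
    rw [hξ', map_add, B.coord_intCast hB, B.coord_intCast_mul]
    simp
  obtain ⟨a, ha⟩ := Int.natCast_dvd_natCast.mp <|
    dvd_of_intCast_add_mul_mem hδ (y := 0) (by simpa using hαI)
  obtain ⟨k, hk⟩ := dvd_of_intCast_add_mul_mem hδ (hξ' ▸ hξ'I)
  have hδ0 : 0 < δ := Nat.pos_of_ne_zero fun h => hα0 (by simp [ha, h])
  have hc₀α : c₀ < α := Int.emod_lt_of_pos _ (by omega)
  obtain ⟨c, rfl⟩ := Int.eq_ofNat_of_zero_le (a := k) <| by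
    nlinarith [Int.emod_nonneg (B.coord 0 ξ) (by exact_mod_cast hα0 : (α : ℤ) ≠ 0)]
  refine ⟨δ, a, c, hδ0, ?_, by exact_mod_cast ha ▸ hα, ?_⟩
  · have : δ * c < δ * a := by rw [← ha]; exact_mod_cast hk ▸ hc₀α
    exact lt_of_mul_lt_mul_left this (Nat.zero_le δ)
  · rw [restrictScalars_eq_span_pair hB I hα hξ'I (fun x hx => hξ'1 ▸ hδ x hx), hξ', hk, ha]
    push_cast
    ring_nf

lemma span_singleton_mul_eq_of_restrictScalars_eq {I J : Ideal S} {d d' u v : S}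
    (hI : I.restrictScalars ℤ = Submodule.span ℤ {d * u, d * v})
    (hJ : J.restrictScalars ℤ = Submodule.span ℤ {d' * u, d' * v}) :
    span {d'} * I = span {d} * J := by
  have mem_iff {K : Ideal S} {e : S} (hK : K.restrictScalars ℤ = Submodule.span ℤ {e * u, e * v})
      (y : S) : y ∈ K ↔ ∃ m k : ℤ, m • (e * u) + k • (e * v) = y := by
    rw [← Submodule.restrictScalars_mem ℤ, hK, Submodule.mem_span_pair]
  ext x
  simp only [mem_span_singleton_mul, mem_iff hI, mem_iff hJ]
  constructor <;> rintro ⟨_, ⟨m, k, rfl⟩, rfl⟩ <;>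
    exact ⟨_, ⟨m, k, rfl⟩, by simp only [zsmul_eq_mul]; ring⟩

lemma comap_algebraMap_int_ne_bot [IsDedekindDomain S] [Module.Free ℤ S] [Module.Finite ℤ S]
    {I : Ideal S} (hI : absNorm I ≠ 0) : I.comap (algebraMap ℤ S) ≠ ⊥ := fun h => hI <| by
  have : (absNorm I : ℤ) ∈ I.comap (algebraMap ℤ S) := by simpa using absNorm_mem I
  rw [h, mem_bot] at this
  exact_mod_cast this

end Ideal

open Ideal in
theorem ClassGroup.two_mul_card_le {S : Type*} [CommRing S] [IsDedekindDomain S]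
    [Module.Free ℤ S] [Module.Finite ℤ S] [Fintype (ClassGroup S)] {B : Basis (Fin 2) ℤ S}
    (hB : B 0 = 1) (N : ℕ)
    (hN : ∀ C : ClassGroup S, ∃ I : (Ideal S)⁰, ClassGroup.mk0 I = C ∧ absNorm (I : Ideal S) ≤ N) :
    2 * Fintype.card (ClassGroup S) ≤ N * (N + 1) := by
  choose I hIC hIN using hN
  have hI0 (C) : absNorm (I C : Ideal S) ≠ 0 := absNorm_ne_zero_of_nonZeroDivisors (I C)
  choose d a c hd hca hmem hspan using fun C =>
    exists_restrictScalars_eq_span_pair hB (I C : Ideal S) (comap_algebraMap_int_ne_bot (hI0 C))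
  have ha (C) : a C ≤ N := by
    have hdvd := (hmem C (absNorm (I C : Ideal S))).mp (by exact_mod_cast absNorm_mem _)
    have : d C * a C ≤ absNorm (I C : Ideal S) :=
      Nat.le_of_dvd (Nat.pos_of_ne_zero (hI0 C)) (by exact_mod_cast hdvd)
    nlinarith [hd C, hIN C]
  let f : ClassGroup S → Σ _ : ℕ, ℕ := fun C => ⟨a C, c C⟩
  have hf : Function.Injective f := fun C C' h => by
    obtain ⟨haC, hcC⟩ := Sigma.mk.inj_iff.mp h
    rw [← hIC C, ← hIC C', ClassGroup.mk0_eq_mk0_iff]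
    refine ⟨d C', d C, B.natCast_ne_zero hB (hd C').ne', B.natCast_ne_zero hB (hd C).ne',
      span_singleton_mul_eq_of_restrictScalars_eq (hspan C) ?_⟩
    rw [hspan C', haC, eq_of_heq hcC]
  calc 2 * Fintype.card (ClassGroup S)
      ≤ 2 * ((Finset.range (N + 1)).sigma Finset.range).card := by
        gcongr
        exact Finset.card_le_card_of_injOn f
          (fun C _ => by simp [f, hca C, Nat.lt_succ_of_le (ha C)]) hf.injOn
    _ = N * (N + 1) := by
        rw [Finset.card_sigma]
        simp only [Finset.card_range]
        rw [mul_comm, Finset.sum_range_id_mul_two, Nat.add_sub_cancel, mul_comm]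

theorem NumberField.abs_discr_le_abs_discr_of_isIntegral {K : Type*} [Field K] [NumberField K]
    {ι : Type*} [Fintype ι] [DecidableEq ι] (b : Basis ι ℚ K) (hb : ∀ i, IsIntegral ℤ (b i)) :
    (|discr K| : ℚ) ≤ |Algebra.discr ℚ b| := by
  let b₀ := (integralBasis K).reindex ((integralBasis K).indexEquiv b)
  have hint : IsIntegral ℤ (b₀.toMatrix b).det := IsIntegral.det fun i j => by
    obtain ⟨x, hx⟩ : ∃ x : 𝓞 K, algebraMap (𝓞 K) K x = b j := ⟨⟨b j, hb j⟩, rfl⟩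
    rw [Basis.toMatrix_apply, Basis.repr_reindex_apply, ← hx, integralBasis_repr_apply]
    exact isIntegral_algebraMap
  obtain ⟨r, hr⟩ := IsIntegrallyClosed.isIntegral_iff.1 hint
  have hr0 : r ≠ 0 := by
    rintro rfl
    exact (b₀.isUnit_det b).ne_zero (by rw [Basis.det_apply, ← hr, map_zero])
  have hdiscr : Algebra.discr ℚ b = (r : ℚ) ^ 2 * discr K := by
    rw [← b₀.toMatrix_map_vecMul b, Algebra.discr_of_matrix_vecMul, ← hr, Basis.coe_reindex,
      Algebra.discr_reindex, coe_discr, eq_intCast]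
  rw [hdiscr, abs_mul, abs_sq]
  exact le_mul_of_one_le_left (abs_nonneg _)
    (mod_cast (one_le_sq_iff_one_le_abs r).mpr (Int.one_le_abs hr0))

section SquareRoot

open Polynomial IntermediateField

variable {F L : Type*} [Field F] [Field L] [Algebra F L] {z : L} {c : F}

lemma aeval_X_sq_sub_C (hz : z ^ 2 = algebraMap F L c) : aeval z (X ^ 2 - C c) = 0 := by
  simp [hz]

lemma minpoly_eq_X_sq_sub_C (hc : ∀ b : F, b ^ 2 ≠ c) (hz : z ^ 2 = algebraMap F L c) :
    minpoly F z = X ^ 2 - C c :=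
  (minpoly.eq_of_irreducible_of_monic (X_pow_sub_C_irreducible_of_prime Nat.prime_two hc)
    (aeval_X_sq_sub_C hz) (monic_X_pow_sub_C c two_ne_zero)).symm

lemma isIntegral_of_sq_eq (hz : z ^ 2 = algebraMap F L c) : IsIntegral F z :=
  ⟨X ^ 2 - C c, monic_X_pow_sub_C c two_ne_zero, by simpa using aeval_X_sq_sub_C hz⟩

lemma finrank_adjoin_of_sq_eq (hc : ∀ b : F, b ^ 2 ≠ c) (hz : z ^ 2 = algebraMap F L c) :
    finrank F F⟮z⟯ = 2 := by
  rw [adjoin.finrank (isIntegral_of_sq_eq hz), minpoly_eq_X_sq_sub_C hc hz, natDegree_X_pow_sub_C]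

lemma discr_adjoin_powerBasis_of_sq_eq [CharZero F] (hc : ∀ b : F, b ^ 2 ≠ c)
    (hz : z ^ 2 = algebraMap F L c) :
    Algebra.discr F (adjoin.powerBasis (isIntegral_of_sq_eq hz)).basis = 4 * c := by
  have := adjoin.finiteDimensional (isIntegral_of_sq_eq hz)
  set pb := adjoin.powerBasis (isIntegral_of_sq_eq hz)
  have hmin : minpoly F pb.gen = X ^ 2 - C c := by
    rw [adjoin.powerBasis_gen, minpoly_gen, minpoly_eq_X_sq_sub_C hc hz]
  have hdim : pb.dim = 2 := by
    rw [adjoin.powerBasis_dim, minpoly_eq_X_sq_sub_C hc hz, natDegree_X_pow_sub_C]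
  have hnorm : Algebra.norm F pb.gen = -c := by
    rw [Algebra.PowerBasis.norm_gen_eq_coeff_zero_minpoly, hmin, hdim]
    simp
  have hder : aeval pb.gen (derivative (X ^ 2 - C c)) = algebraMap F F⟮z⟯ 2 * pb.gen := by
    simp [map_ofNat, one_add_one_eq_two]
  rw [Algebra.discr_powerBasis_eq_norm, hmin, hder, map_mul, Algebra.norm_algebraMap, hnorm,
    finrank_adjoin_of_sq_eq hc hz]
  norm_num

lemma abs_discr_adjoin_le_of_sq_eq {L : Type*} [Field L] [CharZero L] {z : L} {c : ℤ}
    (hc : ∀ b : ℚ, b ^ 2 ≠ c) (hz : z ^ 2 = c) [NumberField ℚ⟮z⟯] :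
    |discr ℚ⟮z⟯| ≤ 4 * |c| := by
  have hz' : z ^ 2 = algebraMap ℚ L c := by simpa using hz
  have hdiscr := discr_adjoin_powerBasis_of_sq_eq hc hz'
  set pb := adjoin.powerBasis (isIntegral_of_sq_eq hz')
  have hint : IsIntegral ℤ z :=
    ⟨X ^ 2 - C c, monic_X_pow_sub_C c two_ne_zero, by rw [← aeval_def]; simp [hz]⟩
  have hgen : IsIntegral ℤ pb.gen := by
    rw [adjoin.powerBasis_gen, ← isIntegral_algebraMap_iff (algebraMap ℚ⟮z⟯ L).injective,
      AdjoinSimple.algebraMap_gen]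
    exact hint
  have h := abs_discr_le_abs_discr_of_isIntegral pb.basis fun i => by
    rw [PowerBasis.coe_basis]
    exact hgen.pow _
  -- `convert` bridges the two `Algebra ℚ ℚ⟮z⟯` instances (number field vs. intermediate field)
  have h' : |(discr ℚ⟮z⟯ : ℚ)| ≤ |4 * (c : ℚ)| := by convert h using 2; exact hdiscr.symm
  rw [abs_mul] at h'
  exact_mod_cast h'

end SquareRoot

namespace NumberField

open Real Nat

variable {K : Type*} [Field K] [NumberField K]

lemma exists_ideal_in_class_of_norm_le_of_finrank_eq_two (h : finrank ℚ K = 2)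
    (C : ClassGroup (𝓞 K)) :
    ∃ I : (Ideal (𝓞 K))⁰, ClassGroup.mk0 I = C ∧
      (Ideal.absNorm (I : Ideal (𝓞 K)) : ℝ) ≤ 2 / π * √|(discr K : ℝ)| := by
  obtain ⟨I, hIC, hI⟩ := exists_ideal_in_class_of_norm_le C
  refine ⟨I, hIC, hI.trans ?_⟩
  have hr : InfinitePlace.nrComplexPlaces K ≤ 1 := by
    have := InfinitePlace.card_add_two_mul_card_eq_rank K
    omega
  have hπ : 1 ≤ 4 / π := by rw [le_div_iff₀ pi_pos]; linarith [pi_le_four]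
  rw [h]
  calc _ ≤ (4 / π) ^ 1 * ((2 : ℕ)! / ((2 : ℕ) : ℝ) ^ 2 * √|(discr K : ℝ)|) := by gcongr
    _ = 2 / π * √|(discr K : ℝ)| := by norm_num [Nat.factorial]; ring

theorem two_mul_classNumber_le_of_finrank_eq_two (h : finrank ℚ K = 2) :
    2 * classNumber K ≤ ⌊2 / π * √|(discr K : ℝ)|⌋₊ * (⌊2 / π * √|(discr K : ℝ)|⌋₊ + 1) := by
  obtain ⟨B, hB⟩ :=
    Module.exists_basis_fin_two_zero_eq_one (S := 𝓞 K) (by rw [RingOfIntegers.rank, h])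
  refine ClassGroup.two_mul_card_le hB _ fun C => ?_
  obtain ⟨I, hIC, hI⟩ := exists_ideal_in_class_of_norm_le_of_finrank_eq_two h C
  exact ⟨I, hIC, Nat.le_floor hI⟩

end NumberField

open Real IntermediateField

lemma mul_add_one_lt_two_mul {t x : ℝ} (hx : 16 ≤ x) (ht0 : 0 ≤ t) (ht : t ≤ 4 / π * √x) :
    t * (t + 1) < 2 * x := by
  have hs : 4 ≤ √x := by rw [show (4 : ℝ) = √16 by norm_num]; exact sqrt_le_sqrt hx
  have hsx : √x ^ 2 = x := sq_sqrt (by linarith)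
  have hπ : 4 / π < 1.274 := by rw [div_lt_iff₀ pi_pos]; linarith [pi_gt_d2]
  have ht' : t ≤ 1.274 * √x := ht.trans (by gcongr)
  nlinarith [mul_le_mul ht' ht' ht0 (by positivity)]

theorem classNumber_adjoin_lt_of_sq_eq {L : Type*} [Field L] [CharZero L] {z : L} {c : ℤ}
    (hc : ∀ b : ℚ, b ^ 2 ≠ c) (hz : z ^ 2 = c) [NumberField ℚ⟮z⟯] {x : ℝ} (hx : 16 ≤ x)
    (hcx : |(c : ℝ)| ≤ x) : (classNumber ℚ⟮z⟯ : ℝ) < x := by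
  have hdiscr : |(discr ℚ⟮z⟯ : ℝ)| ≤ 2 ^ 2 * x := by
    have : (|discr ℚ⟮z⟯| : ℝ) ≤ 4 * |c| := by exact_mod_cast abs_discr_adjoin_le_of_sq_eq hc hz
    push_cast at this
    linarith
  set N := ⌊2 / π * √|(discr ℚ⟮z⟯ : ℝ)|⌋₊
  have hN : (N : ℝ) ≤ 4 / π * √x := (Nat.floor_le (by positivity)).trans <| by
    calc 2 / π * √|(discr ℚ⟮z⟯ : ℝ)| ≤ 2 / π * √(2 ^ 2 * x) := by gcongr
      _ = 4 / π * √x := by rw [sqrt_mul (by positivity), sqrt_sq (by norm_num)]; ring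
  have hfin : finrank ℚ ℚ⟮z⟯ = 2 := finrank_adjoin_of_sq_eq hc (by simpa using hz)
  have hcard : 2 * classNumber ℚ⟮z⟯ ≤ N * (N + 1) := two_mul_classNumber_le_of_finrank_eq_two hfin
  replace hcard : (2 * classNumber ℚ⟮z⟯ : ℝ) ≤ N * (N + 1) := by exact_mod_cast hcard
  linarith [mul_add_one_lt_two_mul hx (Nat.cast_nonneg N) hN]

lemma sixteen_le_exp_seven : (16 : ℝ) ≤ exp 7 :=
  calc (16 : ℝ) ≤ (7 / 2 + 1) ^ 2 := by norm_num
    _ ≤ exp (7 / 2) ^ 2 := by gcongr; exact add_one_le_exp _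
    _ = exp 7 := by rw [← exp_nat_mul]; norm_num

theorem stmt_0_general (p : ℕ) (hge : Real.exp 7 ≤ (p : ℝ))
    (x1 : ℕ) (hlt : x1 ^ 2 < p)
    (z : ℂ) (hz : z ^ 2 = (x1 : ℂ) ^ 2 - (p : ℂ))
    (K : IntermediateField ℚ ℂ) (hK : K = IntermediateField.adjoin ℚ {z})
    [NumberField K] :
    ¬ (p ∣ NumberField.classNumber K) := by
  subst hK
  have hc : (x1 : ℤ) ^ 2 - p < 0 := by
    have : (x1 : ℤ) ^ 2 < p := by exact_mod_cast hlt
    linarith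
  have hsq (b : ℚ) : b ^ 2 ≠ ((x1 ^ 2 - p : ℤ) : ℚ) := fun h => by
    have : ((x1 ^ 2 - p : ℤ) : ℚ) < 0 := by exact_mod_cast hc
    nlinarith [sq_nonneg b]
  have hcp : |((x1 ^ 2 - p : ℤ) : ℝ)| ≤ p := by
    rw [abs_of_neg (by exact_mod_cast hc)]
    push_cast
    nlinarith [sq_nonneg (x1 : ℝ)]
  have hlt := classNumber_adjoin_lt_of_sq_eq hsq (by rw [hz]; push_cast; ring)
    (sixteen_le_exp_seven.trans hge) hcp
  intro hdvd
  exact hlt.not_ge (by exact_mod_cast Nat.le_of_dvd (classNumber_pos _) hdvd)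

/-- Let `p` be an odd prime number with `p ≥ e^7` and let `x1` be a positive integer with
`x1^2 < p`. Then `p` does not divide the class number of the imaginary quadratic field
`ℚ(√(x1^2 − p))`. -/
theorem stmt_0 (p : ℕ) (hp : p.Prime) (hodd : Odd p) (hge : Real.exp 7 ≤ (p : ℝ))
    (x1 : ℕ) (hx1 : 0 < x1) (hlt : x1 ^ 2 < p)
    (z : ℂ) (hz : z ^ 2 = (x1 : ℂ) ^ 2 - (p : ℂ))
    (K : IntermediateField ℚ ℂ) (hK : K = IntermediateField.adjoin ℚ {z})
    [NumberField K] :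
    ¬ (p ∣ NumberField.classNumber K) :=
  stmt_0_general p hge x1 hlt z hz K hK
end

section
/- Let p be a prime with p ≡ 3 (mod 4), p ≠ 3, and 2^{p−1} ≢ 1 (mod p^2). If n1 and n2 are positive odd integers such that ℚ(√(1 − p^{n1})) = ℚ(√(1 − p^{n2})) (equivalently, the squarefree parts of 1 − p^{n1} and 1 − p^{n2} coincide), then n1 = n2. -/
/-!
If `ℚ(√(1 - p^m)) = ℚ(√(1 - p^n))`, then `(p^m - 1)(p^n - 1)` is a square. With `g = gcd(m, n)`
and `q = p^g`, the two factors are `q - 1` times coprime base-`q` repunits, so for `m < n` the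
repunit `1 + q + ⋯ + q^(2c)` (`c ≥ 1`) is a square `y^2`, i.e. `(q - 1) y^2 + 1 = q P^2` with
`P = q^c`. Dividing `√q P + √(q-1) y` by `√q + √(q-1)` gives a solution of the Pell equation
`x^2 - 4q(q-1) t^2 = 1`, whose fundamental solution is `(√q + √(q-1))^2`; hence `P` is the
`√q`-coefficient of `(√q + √(q-1))^(2M+1)`, namely `∑ⱼ C(2M+1, 2j+1) q^j (q-1)^(M-j)`. Modulo
`p^(v+1)`, where `p^v ∥ 2M+1`, this sum is congruent to its `j = 0` term `(2M+1)(q-1)^M`, so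
(for `p ≥ 5`) it is never a positive power of `p`.
-/

open Finset

theorem Finset.sum_range_two_mul {M : Type*} [AddCommMonoid M] (f : ℕ → M) (n : ℕ) :
    ∑ i ∈ range (2 * n), f i = ∑ j ∈ range n, (f (2 * j) + f (2 * j + 1)) := by
  induction n with
  | zero => simp
  | succ n ih => rw [Nat.mul_succ, sum_range_succ, sum_range_succ, sum_range_succ, ih, add_assoc]

namespace Zsqrtd

variable {d : ℤ}

theorem im_sum {ι : Type*} (s : Finset ι) (f : ι → ℤ√d) :
    (∑ i ∈ s, f i).im = ∑ i ∈ s, (f i).im :=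
  map_sum (AddMonoidHom.mk' im im_add) f s

theorem sqrtd_pow_two_mul (j : ℕ) : (sqrtd : ℤ√d) ^ (2 * j) = ((d ^ j : ℤ) : ℤ√d) := by
  rw [pow_mul, sq, dmuld, Int.cast_pow]

theorem im_pow_two_mul_add_one (c : ℤ) (M : ℕ) :
    ((⟨c, 1⟩ : ℤ√d) ^ (2 * M + 1)).im =
      ∑ j ∈ range (M + 1), ((2 * M + 1).choose (2 * j + 1) : ℤ) * d ^ j * (c ^ 2) ^ (M - j) := by
  have hc : (⟨c, 1⟩ : ℤ√d) = sqrtd + (c : ℤ√d) := by ext <;> simp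
  rw [hc, add_pow, show 2 * M + 1 + 1 = 2 * (M + 1) by ring, sum_range_two_mul, im_sum]
  refine sum_congr rfl fun j hj => ?_
  have hjM : j ≤ M := Nat.lt_succ_iff.mp (mem_range.mp hj)
  have e : (sqrtd : ℤ√d) ^ (2 * j) * (c : ℤ√d) ^ (2 * M + 1 - 2 * j)
        * ((2 * M + 1).choose (2 * j) : ℤ√d)
      + sqrtd ^ (2 * j + 1) * (c : ℤ√d) ^ (2 * M + 1 - (2 * j + 1))
        * ((2 * M + 1).choose (2 * j + 1) : ℤ√d)
      = ((d ^ j * c ^ (2 * M + 1 - 2 * j) * (2 * M + 1).choose (2 * j) : ℤ) : ℤ√d)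
        + ((d ^ j * (c ^ 2) ^ (M - j) * (2 * M + 1).choose (2 * j + 1) : ℤ) : ℤ√d) * sqrtd := by
    rw [pow_succ, sqrtd_pow_two_mul, show 2 * M + 1 - (2 * j + 1) = 2 * (M - j) by omega, pow_mul]
    push_cast
    ring
  rw [e]
  simp only [im_add, im_mul, re_intCast, im_intCast, im_sqrtd, re_sqrtd]
  ring

/-- `γ = 2r + √d` satisfies `γ ^ 2 = 4r (2r + 1 + √d)`, so `(4r) ^ M (2r + 1 + √d) ^ M γ = γ ^ (2M+1)`,
whose imaginary part is given by the binomial theorem. -/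
theorem im_pow_mul_eq_sum_choose (r : ℤ) (hr : r ≠ 0) (hd : d = 4 * r * (r + 1)) (M : ℕ) :
    ((⟨2 * r + 1, 1⟩ : ℤ√d) ^ M * ⟨2 * r, 1⟩).im =
      ∑ j ∈ range (M + 1), ((2 * M + 1).choose (2 * j + 1) : ℤ) * (r + 1) ^ j * r ^ (M - j) := by
  set α : ℤ√d := ⟨2 * r + 1, 1⟩
  set γ : ℤ√d := ⟨2 * r, 1⟩
  have hγ : γ ^ 2 = ((4 * r : ℤ) : ℤ√d) * α := by
    ext <;> simp [α, γ, sq, hd] <;> ring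
  have hpow : γ ^ (2 * M + 1) = (((4 * r) ^ M : ℤ) : ℤ√d) * (α ^ M * γ) := by
    rw [pow_succ, pow_mul, hγ, mul_pow, Int.cast_pow, mul_assoc]
  have key : (4 * r) ^ M * (α ^ M * γ).im = (4 * r) ^ M *
      ∑ j ∈ range (M + 1), ((2 * M + 1).choose (2 * j + 1) : ℤ) * (r + 1) ^ j * r ^ (M - j) := by
    rw [← im_smul, ← hpow, im_pow_two_mul_add_one, mul_sum]
    refine sum_congr rfl fun j hj => ?_
    obtain ⟨k, rfl⟩ : ∃ k, M = j + k := ⟨M - j, by have := mem_range.mp hj; omega⟩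
    rw [Nat.add_sub_cancel_left, hd, mul_pow, mul_pow]
    ring
  exact mul_left_cancel₀ (pow_ne_zero _ (mul_ne_zero four_ne_zero hr)) key

end Zsqrtd

/-- With `q = r + 1`, the solution is `u + t √(4q(q-1)) = (√q P + √(q-1) y) (√q - √(q-1))`;
in particular `y = P + 2t`. -/
theorem exists_pell_solution_of_mul_sq_add_one_eq {r P y : ℕ}
    (h : r * y ^ 2 + 1 = (r + 1) * P ^ 2) (hP : Odd P) (hy : Odd y) :
    ∃ u t : ℕ, u ^ 2 = 4 * r * (r + 1) * t ^ 2 + 1 ∧ P = u + 2 * r * t := by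
  have hPy : P ≤ y := by
    by_contra! hyP
    have := Nat.mul_le_mul_left r (Nat.pow_le_pow_left hyP.le 2)
    have : P ^ 2 ≤ 1 := by nlinarith
    have : P ≤ 1 := by nlinarith
    obtain ⟨k, rfl⟩ := hy
    omega
  obtain ⟨t, rfl⟩ : ∃ t, y = P + 2 * t := by
    obtain ⟨t, ht⟩ := Nat.Odd.sub_odd hy hP
    exact ⟨t, by omega⟩
  obtain ⟨u, rfl⟩ : ∃ u, P = u + 2 * r * t := ⟨P - 2 * r * t, by
    have : 2 * r * t ≤ P := by nlinarith
    omega⟩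
  exact ⟨u, t, by nlinarith, rfl⟩

theorem exists_eq_sum_choose_of_mul_sq_add_one_eq {r P y : ℕ} (hr : 0 < r)
    (h : r * y ^ 2 + 1 = (r + 1) * P ^ 2) (hP : Odd P) (hy : Odd y) :
    ∃ M, P = ∑ j ∈ range (M + 1), (2 * M + 1).choose (2 * j + 1) * (r + 1) ^ j * r ^ (M - j) := by
  obtain ⟨u, t, hut, rfl⟩ := exists_pell_solution_of_mul_sq_add_one_eq h hP hy
  have a1 : 1 < 2 * r + 1 := by omega
  obtain ⟨M, rfl, rfl⟩ := Pell.eq_pell a1 (x := u) (y := t) (by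
    show u * u - ((2 * r + 1) * (2 * r + 1) - 1) * t * t = 1
    have : (2 * r + 1) * (2 * r + 1) - 1 = 4 * r * (r + 1) := by
      rw [Nat.sub_eq_iff_eq_add (by nlinarith)]; ring
    rw [this]
    have hut' : u * u = 4 * r * (r + 1) * t * t + 1 := by rw [← sq, hut]; ring
    omega)
  refine ⟨M, ?_⟩
  have hα : ∀ n, Pell.pellZd a1 n = ⟨2 * r + 1, 1⟩ ^ n := by
    intro n
    induction n with
    | zero => ext <;> simp
    | succ n ih => rw [Pell.pellZd_succ, ih, pow_succ]; push_cast; rfl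
  have key := Zsqrtd.im_pow_mul_eq_sum_choose (r : ℤ) (by positivity)
    ((Pell.dz_val a1).trans (by simp only [Pell.az]; push_cast; ring)) M
  rw [← hα, Zsqrtd.im_mul, Pell.re_pellZd, Pell.im_pellZd] at key
  have : (Pell.xn a1 M : ℤ) + 2 * r * Pell.yn a1 M =
      ∑ j ∈ range (M + 1), ((2 * M + 1).choose (2 * j + 1) : ℤ) * (r + 1) ^ j * r ^ (M - j) := by
    linear_combination key
  exact_mod_cast this

theorem Nat.pow_succ_dvd_choose_mul_pow {p v N j : ℕ} (hp : p.Prime) (hp5 : 5 ≤ p)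
    (hv : p ^ v ∣ N) (hj : 0 < j) (hjN : 2 * j + 1 ≤ N) :
    p ^ (v + 1) ∣ N.choose (2 * j + 1) * p ^ j := by
  obtain ⟨w, s, hs, hjs⟩ :=
    Nat.exists_eq_pow_mul_and_not_dvd (n := 2 * j + 1) (by omega) p hp.ne_one
  have hC : p ^ v ∣ N.choose (2 * j + 1) * p ^ w * s := by
    obtain ⟨N, rfl⟩ : ∃ N', N = N' + 1 := ⟨N - 1, by omega⟩
    rw [mul_assoc, ← hjs, ← Nat.add_one_mul_choose_eq]
    exact hv.mul_right _
  have hCw : p ^ v ∣ N.choose (2 * j + 1) * p ^ w :=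
    (Nat.Coprime.pow_left v ((Nat.Prime.coprime_iff_not_dvd hp).2 hs)).dvd_of_dvd_mul_right hC
  have hwj : w + 1 ≤ j := by
    have h1 : 5 * w ≤ p * w := Nat.mul_le_mul_right w hp5
    have h2 : p * w ≤ p ^ w := Nat.mul_le_pow hp.ne_one w
    have h3 : p ^ w ≤ 2 * j + 1 := Nat.le_of_dvd (by omega) (hjs ▸ dvd_mul_right _ _)
    omega
  calc p ^ (v + 1) ∣ N.choose (2 * j + 1) * p ^ w * p := by
        rw [pow_succ]; exact mul_dvd_mul_right hCw p
    _ = N.choose (2 * j + 1) * p ^ (w + 1) := by ring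
    _ ∣ N.choose (2 * j + 1) * p ^ j := mul_dvd_mul_left _ (pow_dvd_pow p hwj)

theorem sum_choose_mul_pow_ne_prime_pow {p g r k : ℕ} (hp : p.Prime) (hp5 : 5 ≤ p) (hg : 0 < g)
    (hr : r + 1 = p ^ g) (hk : 0 < k) (M : ℕ) :
    ∑ j ∈ range (M + 1), (2 * M + 1).choose (2 * j + 1) * (r + 1) ^ j * r ^ (M - j) ≠ p ^ k := by
  intro h
  rcases Nat.eq_zero_or_pos M with rfl | hM
  · exact (Nat.one_lt_pow hk.ne' hp.one_lt).ne (by simpa using h)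
  obtain ⟨v, N, hN, hMN⟩ :=
    Nat.exists_eq_pow_mul_and_not_dvd (n := 2 * M + 1) (by omega) p hp.ne_one
  rw [sum_range_succ', Nat.choose_one_right, pow_zero, mul_one, Nat.sub_zero] at h
  have hrest : p ^ (v + 1) ∣ ∑ j ∈ range M,
      (2 * M + 1).choose (2 * (j + 1) + 1) * (r + 1) ^ (j + 1) * r ^ (M - (j + 1)) := by
    refine dvd_sum fun j hj => ?_
    have hjM := mem_range.mp hj
    refine ((Nat.pow_succ_dvd_choose_mul_pow hp hp5 (hMN ▸ dvd_mul_right _ _) j.succ_pos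
      (by omega)).trans ?_).mul_right _
    rw [hr, ← pow_mul]
    exact mul_dvd_mul_left _ (pow_dvd_pow p (Nat.le_mul_of_pos_left _ hg))
  have hpr : ¬ p ∣ r := fun hpr =>
    hp.one_lt.ne' (Nat.dvd_one.mp ((Nat.dvd_add_right hpr).mp (hr ▸ dvd_pow_self p hg.ne')))
  by_cases hvk : v + 1 ≤ k
  · have h1 : p ^ (v + 1) ∣ (2 * M + 1) * r ^ M :=
      (Nat.dvd_add_right hrest).mp (h ▸ pow_dvd_pow p hvk)
    have h2 := (Nat.Coprime.pow (v + 1) M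
      ((Nat.Prime.coprime_iff_not_dvd hp).2 hpr)).dvd_of_dvd_mul_right h1
    rw [hMN, pow_succ] at h2
    exact hN (Nat.dvd_of_mul_dvd_mul_left (pow_pos hp.pos v) h2)
  · have h1 : p ^ k ≤ 2 * M + 1 := (Nat.pow_le_pow_right hp.pos (by omega)).trans
      (Nat.le_of_dvd (by omega) (hMN ▸ dvd_mul_right _ _))
    have h2 : 2 ≤ r ^ M := by
      have := Nat.le_self_pow hg.ne' p
      exact le_trans (by omega) (Nat.le_self_pow hM.ne' r)
    have h3 : (2 * M + 1) * 2 ≤ (2 * M + 1) * r ^ M := Nat.mul_le_mul_left _ h2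
    omega

theorem not_isSquare_geom_sum_prime_pow {p g k : ℕ} (hp : p.Prime) (hp5 : 5 ≤ p) (hg : 0 < g)
    (hk : Odd k) (hk1 : 1 < k) : ¬IsSquare (∑ i ∈ range k, (p ^ g) ^ i) := by
  rintro ⟨y, hy⟩
  obtain ⟨r, hr⟩ : ∃ r, r + 1 = p ^ g :=
    ⟨p ^ g - 1, Nat.sub_add_cancel (Nat.one_le_pow _ _ hp.pos)⟩
  have hr0 : 0 < r := by have := Nat.le_self_pow hg.ne' p; omega
  have hq : Odd (r + 1) := hr ▸ (hp.odd_of_ne_two (by omega)).pow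
  rw [← hr] at hy
  have hy_odd : Odd y := by
    have hsum : Odd (∑ i ∈ range k, (r + 1) ^ i) := by
      rw [odd_sum_iff_odd_card_odd, filter_true_of_mem fun i _ => hq.pow, card_range]
      exact hk
    exact (Nat.odd_mul.mp (hy ▸ hsum)).1
  obtain ⟨c, rfl⟩ := hk
  have hgeom : r * y ^ 2 + 1 = (r + 1) * ((r + 1) ^ c) ^ 2 := by
    rw [sq y, ← hy, mul_comm r, geom_sum_mul_add, ← pow_mul, ← pow_succ', mul_comm c]
  obtain ⟨M, hM⟩ := exists_eq_sum_choose_of_mul_sq_add_one_eq hr0 hgeom hq.pow hy_odd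
  refine sum_choose_mul_pow_ne_prime_pow hp hp5 hg hr (k := g * c) (Nat.mul_pos hg (by omega)) M
    ?_
  rw [← hM, hr, pow_mul]

theorem isSquare_geom_sum_of_isSquare_mul {x k l : ℕ} (hx : 1 < x) (hkl : k.Coprime l)
    (h : IsSquare ((x ^ k - 1) * (x ^ l - 1))) : IsSquare (∑ i ∈ range l, x ^ i) := by
  obtain ⟨r, rfl⟩ : ∃ r, x = r + 1 := ⟨x - 1, by omega⟩
  have hgeom : ∀ n, (r + 1) ^ n - 1 = (∑ i ∈ range n, (r + 1) ^ i) * r := fun n => by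
    rw [← geom_sum_mul_add r n, Nat.add_sub_cancel]
  set A := ∑ i ∈ range k, (r + 1) ^ i
  set B := ∑ i ∈ range l, (r + 1) ^ i
  have hAB : Nat.gcd B A = 1 := by
    have := Nat.pow_sub_one_gcd_pow_sub_one (r + 1) l k
    rw [Nat.gcd_comm l k, hkl, hgeom, hgeom, Nat.gcd_mul_right, pow_one,
      Nat.add_sub_cancel] at this
    exact (Nat.mul_eq_right (by omega)).mp this
  obtain ⟨t, ht⟩ : IsSquare (B * A) := by
    rw [← Rat.isSquare_natCast_iff]
    obtain ⟨s, hs⟩ := h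
    refine ⟨s / r, ?_⟩
    rw [hgeom, hgeom] at hs
    have hr : (r : ℚ) ≠ 0 := by exact_mod_cast (show r ≠ 0 by omega)
    field_simp
    exact_mod_cast (by rw [sq s, ← hs]; ring : B * A * r ^ 2 = s ^ 2)
  obtain ⟨d, hd⟩ :=
    exists_eq_pow_of_mul_eq_pow (Nat.isUnit_iff.mpr hAB) (k := 2) (ht.trans (sq t).symm)
  exact ⟨d, hd.trans (sq d)⟩

theorem not_isSquare_pow_sub_one_mul_pow_sub_one {p m n : ℕ} (hp : p.Prime) (hp5 : 5 ≤ p)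
    (hm : Odd m) (hn : Odd n) (hmn : m ≠ n) : ¬IsSquare ((p ^ m - 1) * (p ^ n - 1)) := by
  wlog hlt : m < n generalizing m n
  · rw [mul_comm]; exact this hn hm hmn.symm (by omega)
  obtain ⟨g, k, l, hg, hkl, rfl, rfl⟩ := Nat.exists_coprime' (Nat.gcd_pos_of_pos_left n hm.pos)
  intro h
  rw [mul_comm k, mul_comm l, pow_mul, pow_mul] at h
  have hk := (Nat.odd_mul.mp hm).1
  refine not_isSquare_geom_sum_prime_pow hp hp5 hg (Nat.odd_mul.mp hn).1 ?_
    (isSquare_geom_sum_of_isSquare_mul (Nat.one_lt_pow hg.ne' hp.one_lt) hkl h)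
  have := Nat.lt_of_mul_lt_mul_right hlt
  have := hk.pos
  omega

namespace IntermediateField

open Polynomial

theorem exists_eq_add_mul_of_mem_adjoin_simple {K L : Type*} [Field K] [Field L]
    [Algebra K L] {z w : L} {b : K} (hz : z ^ 2 = algebraMap K L b) (hw : w ∈ K⟮z⟯) :
    ∃ r s : K, w = algebraMap K L r + algebraMap K L s * z := by
  have hmonic : (X ^ 2 - C b).Monic := monic_X_pow_sub_C b two_ne_zero
  have hroot : aeval z (X ^ 2 - C b) = 0 := by simp [hz]
  rw [← mem_toSubalgebra, adjoin_simple_toSubalgebra_of_isAlgebraic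
    (IsIntegral.isAlgebraic ⟨_, hmonic, hroot⟩), Algebra.adjoin_singleton_eq_range_aeval] at hw
  obtain ⟨f, rfl⟩ := hw
  have hdeg : (f %ₘ (X ^ 2 - C b)).degree ≤ 1 := by
    have := degree_modByMonic_lt f hmonic
    rw [degree_X_pow_sub_C two_pos] at this
    exact Order.le_of_lt_succ this
  refine ⟨(f %ₘ (X ^ 2 - C b)).coeff 0, (f %ₘ (X ^ 2 - C b)).coeff 1, ?_⟩
  rw [AlgHom.toRingHom_eq_coe, RingHom.coe_coe, ← aeval_modByMonic_eq_self_of_root hroot,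
    eq_X_add_C_of_degree_le_one hdeg]
  simp [add_comm]

theorem exists_eq_sq_mul_of_mem_adjoin_simple {K L : Type*} [Field K]
    [NeZero (2 : K)] [Field L] [Algebra K L] {z w : L} {a b : K} (ha : ¬IsSquare a)
    (hb : ¬IsSquare b) (hz : z ^ 2 = algebraMap K L b) (hw : w ^ 2 = algebraMap K L a)
    (hwz : w ∈ K⟮z⟯) : ∃ s : K, a = s ^ 2 * b := by
  obtain ⟨r, s, rfl⟩ := exists_eq_add_mul_of_mem_adjoin_simple hz hwz
  set φ := algebraMap K L
  have key : φ a = φ (r ^ 2 + s ^ 2 * b) + φ (2 * r * s) * z := by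
    rw [← hw, map_add, map_mul, map_mul, map_mul, map_pow, map_pow, ← hz, map_ofNat]; ring
  rcases eq_or_ne r 0 with rfl | hr
  · exact ⟨s, φ.injective (by simpa using key)⟩
  rcases eq_or_ne s 0 with rfl | hs
  · exact absurd ⟨r, φ.injective (by simpa [sq] using key)⟩ ha
  have hz' : z = φ ((a - r ^ 2 - s ^ 2 * b) / (2 * r * s)) := by
    have : φ (2 * r * s) ≠ 0 :=
      (map_ne_zero φ).mpr (mul_ne_zero (mul_ne_zero two_ne_zero hr) hs)
    rw [map_div₀, eq_div_iff this, map_sub, map_sub, key, map_add]; ring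
  exact (hb ⟨_, φ.injective (by rw [← hz, hz', sq, map_mul])⟩).elim

end IntermediateField

theorem stmt_3_general (p : ℕ) (hp : p.Prime) (hmod : p % 4 = 3) (hne : p ≠ 3)
    (n1 n2 : ℕ) (ho1 : Odd n1) (ho2 : Odd n2)
    (z1 z2 : ℂ) (hz1 : z1 ^ 2 = 1 - (p : ℂ) ^ n1) (hz2 : z2 ^ 2 = 1 - (p : ℂ) ^ n2)
    (heq : IntermediateField.adjoin ℚ {z1} = IntermediateField.adjoin ℚ {z2}) :
    n1 = n2 := by
  have hp5 : 5 ≤ p := by have := hp.two_le; omega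
  have hnsq : ∀ n, Odd n → ¬IsSquare (1 - (p : ℚ) ^ n) := by
    rintro n hn ⟨c, hc⟩
    have : (p : ℚ) ≤ p ^ n := le_self_pow₀ (by exact_mod_cast hp.one_le) hn.pos.ne'
    nlinarith [mul_self_nonneg c, (show (5 : ℚ) ≤ p by exact_mod_cast hp5)]
  have hcast : ∀ (z : ℂ) n, z ^ 2 = 1 - (p : ℂ) ^ n →
      z ^ 2 = algebraMap ℚ ℂ (1 - (p : ℚ) ^ n) :=
    fun z n hz => by simp [hz]
  obtain ⟨s, hs⟩ := IntermediateField.exists_eq_sq_mul_of_mem_adjoin_simple (hnsq n1 ho1)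
    (hnsq n2 ho2) (hcast _ _ hz2) (hcast _ _ hz1)
    (heq ▸ IntermediateField.mem_adjoin_simple_self ℚ z1)
  by_contra hn12
  refine not_isSquare_pow_sub_one_mul_pow_sub_one hp hp5 ho1 ho2 hn12 ?_
  rw [← Rat.isSquare_natCast_iff]
  refine ⟨s * ((p : ℚ) ^ n2 - 1), ?_⟩
  push_cast [Nat.cast_sub (Nat.one_le_pow _ _ hp.pos)]
  linear_combination (1 - (p : ℚ) ^ n2) * hs

/-- Let `p` be a prime with `p ≡ 3 (mod 4)`, `p ≠ 3`, and `2^(p−1) ≢ 1 (mod p^2)`.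
If `n1` and `n2` are positive odd integers such that `ℚ(√(1 − p^n1)) = ℚ(√(1 − p^n2))`,
then `n1 = n2`. -/
theorem stmt_3 (p : ℕ) (hp : p.Prime) (hmod : p % 4 = 3) (hne : p ≠ 3)
    (hnw : ¬ (2 ^ (p - 1) ≡ 1 [MOD p ^ 2]))
    (n1 n2 : ℕ) (hpos1 : 0 < n1) (hpos2 : 0 < n2) (ho1 : Odd n1) (ho2 : Odd n2)
    (z1 z2 : ℂ) (hz1 : z1 ^ 2 = 1 - (p : ℂ) ^ n1) (hz2 : z2 ^ 2 = 1 - (p : ℂ) ^ n2)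
    (heq : IntermediateField.adjoin ℚ {z1} = IntermediateField.adjoin ℚ {z2}) :
    n1 = n2 :=
  stmt_3_general p hp hmod hne n1 n2 ho1 ho2 z1 z2 hz1 hz2 heq
end

section
/- Let p and q5 be distinct odd prime numbers. Then there is no positive integer x such that 4·q5^2 − 3·p^x = 1, and there is no positive integer x such that 4·q5^2 − 3·p^x = −1. -/
/-- Let `p` and `q5` be distinct odd prime numbers. Then there is no positive integer `x`
such that `4·q5^2 − 3·p^x = 1`, and there is no positive integer `x` such that
`4·q5^2 − 3·p^x = −1`. -/
theorem stmt_13 (p q5 : ℕ) (hp : p.Prime) (hq5 : q5.Prime) (hpodd : Odd p) (hqodd : Odd q5)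
    (hne : p ≠ q5) :
    (¬ ∃ x : ℕ, 0 < x ∧ 4 * (q5 : ℤ) ^ 2 - 3 * (p : ℤ) ^ x = 1) ∧
    (¬ ∃ x : ℕ, 0 < x ∧ 4 * (q5 : ℤ) ^ 2 - 3 * (p : ℤ) ^ x = -1) := by
  have hq2 : 2 ≤ q5 := hq5.two_le
  have hqodd' : q5 % 2 = 1 := Nat.odd_iff.mp hqodd
  have hq3 : 3 ≤ q5 := by omega
  constructor
  · rintro ⟨x, hx, heq⟩
    -- 4 q² - 1 = 3 p^x, so (2q-1)(2q+1) = 3 p^x in ℕ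
    have hnateq : 4 * q5 ^ 2 = 3 * p ^ x + 1 := by
      zify; push_cast; linarith
    have hnat : (2 * q5 - 1) * (2 * q5 + 1) = 3 * p ^ x := by
      have h1 : 1 ≤ 2 * q5 := by omega
      nlinarith [Nat.sub_add_cancel h1]
    set N := 2 * q5 - 1 with hN
    set M := 2 * q5 + 1 with hM
    have hN5 : 5 ≤ N := by omega
    have hM7 : 7 ≤ M := by omega
    have hNodd : N % 2 = 1 := by omega
    have hMN : M - N = 2 := by omega
    have hcop : Nat.Coprime N M := by
      have hg2 : Nat.gcd N M ∣ 2 := by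
        rw [← hMN]; exact Nat.dvd_sub (Nat.gcd_dvd_right N M) (Nat.gcd_dvd_left N M)
      rcases (Nat.dvd_prime Nat.prime_two).mp hg2 with h | h
      · exact h
      · exfalso
        have h2N : 2 ∣ N := h ▸ Nat.gcd_dvd_left N M
        omega
    -- p cannot divide both N and M
    have hpnot : ¬ (p ∣ N) ∨ ¬ (p ∣ M) := by
      by_contra h
      push_neg at h
      have hdg : p ∣ Nat.gcd N M := Nat.dvd_gcd h.1 h.2
      rw [hcop] at hdg
      have := Nat.le_of_dvd one_pos hdg
      have := hp.two_le
      omega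
    rcases hpnot with hnd | hnd
    · have hcopN : Nat.Coprime N (p ^ x) :=
        Nat.Coprime.pow_right x ((hp.coprime_iff_not_dvd.mpr hnd).symm)
      have hNdvd : N ∣ 3 * p ^ x := ⟨M, hnat.symm⟩
      have : N ∣ 3 := Nat.Coprime.dvd_of_dvd_mul_right hcopN hNdvd
      have := Nat.le_of_dvd (by norm_num) this
      omega
    · have hcopM : Nat.Coprime M (p ^ x) :=
        Nat.Coprime.pow_right x ((hp.coprime_iff_not_dvd.mpr hnd).symm)
      have hMdvd : M ∣ 3 * p ^ x := ⟨N, by rw [← hnat]; ring⟩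
      have : M ∣ 3 := Nat.Coprime.dvd_of_dvd_mul_right hcopM hMdvd
      have := Nat.le_of_dvd (by norm_num) this
      omega
  · rintro ⟨x, hx, heq⟩
    have h3 : ((q5 : ZMod 3)) ^ 2 = 2 := by
      have hc := congrArg (fun z : ℤ => (z : ZMod 3)) heq
      push_cast at hc
      have h3p : ((3 : ZMod 3)) = 0 := by decide
      rw [h3p] at hc
      linear_combination hc - ((q5 : ZMod 3) ^ 2 + 1) * h3p
    revert h3
    generalize (q5 : ZMod 3) = a
    revert a
    decide
end

section
/- Let p and q6 be distinct odd prime numbers. Then there is no positive integer x such that 16·q6^2 − 3·p^x = 1, and there is no positive integer x such that 16·q6^2 − 3·p^x = −1. -/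
/-- Let `p` and `q6` be distinct odd prime numbers. Then there is no positive integer `x`
such that `16·q6^2 − 3·p^x = 1`, and there is no positive integer `x` such that
`16·q6^2 − 3·p^x = −1`. -/
theorem stmt_16 (p q6 : ℕ) (hp : p.Prime) (hq6 : q6.Prime) (hpodd : Odd p) (hqodd : Odd q6)
    (hne : p ≠ q6) :
    (¬ ∃ x : ℕ, 0 < x ∧ 16 * (q6 : ℤ) ^ 2 - 3 * (p : ℤ) ^ x = 1) ∧
    (¬ ∃ x : ℕ, 0 < x ∧ 16 * (q6 : ℤ) ^ 2 - 3 * (p : ℤ) ^ x = -1) := by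
  have hq2 : q6 ≠ 2 := by
    rintro rfl; exact (by decide : ¬ Odd 2) hqodd
  have hq3 : 3 ≤ q6 := by
    have := hq6.two_le; omega
  constructor
  · rintro ⟨x, hx, hEq⟩
    have h1 : (16 * (q6 : ℤ) ^ 2) = 3 * (p : ℤ) ^ x + 1 := by linarith
    have h1n : 16 * q6 ^ 2 = 3 * p ^ x + 1 := by exact_mod_cast h1
    obtain ⟨k, hk⟩ : ∃ k, 4 * q6 = k + 1 := ⟨4 * q6 - 1, by omega⟩
    have hkge : 11 ≤ k := by omega
    have hmain : k * (k + 2) = 3 * p ^ x := by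
      have : (k + 1) ^ 2 = 16 * q6 ^ 2 := by
        rw [← hk]; ring
      nlinarith [this, h1n]
    have hkodd : k % 2 = 1 := by omega
    have hcop : Nat.Coprime k (k + 2) := by
      have h2 : Nat.gcd k (k + 2) ∣ 2 := by
        have := Nat.dvd_sub (Nat.gcd_dvd_right k (k + 2)) (Nat.gcd_dvd_left k (k + 2))
        simpa using this
      rcases (Nat.dvd_prime Nat.prime_two).mp h2 with h | h
      · exact h
      · exfalso
        have : 2 ∣ k := h ▸ Nat.gcd_dvd_left _ _
        omega
    have hpdvd : p ∣ k * (k + 2) := by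
      rw [hmain]
      exact Dvd.dvd.mul_left (dvd_pow_self p hx.ne') 3
    rcases hp.dvd_mul.mp hpdvd with hpk | hpk
    · -- p ∣ k, so k+2 divides 3
      have hcopp : Nat.Coprime (k + 2) (p ^ x) :=
        ((Nat.Coprime.coprime_dvd_left hpk hcop).symm).pow_right x
      have hdvd : (k + 2) ∣ 3 * p ^ x := by
        rw [← hmain]; exact Dvd.intro_left k rfl
      have : (k + 2) ∣ 3 := hcopp.dvd_of_dvd_mul_right hdvd
      have := Nat.le_of_dvd (by norm_num) this
      omega
    · -- p ∣ k+2, so k divides 3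
      have hcopp : Nat.Coprime k (p ^ x) :=
        (Nat.Coprime.coprime_dvd_right hpk hcop).pow_right x
      have hdvd : k ∣ 3 * p ^ x := by
        rw [← hmain]; exact Dvd.intro _ rfl
      have : k ∣ 3 := hcopp.dvd_of_dvd_mul_right hdvd
      have := Nat.le_of_dvd (by norm_num) this
      omega
  · rintro ⟨x, hx, hEq⟩
    have h : (16 : ZMod 3) * (q6 : ZMod 3) ^ 2 - 3 * (p : ZMod 3) ^ x = -1 := by
      have := congrArg (fun z : ℤ => (z : ZMod 3)) hEq
      push_cast at this
      exact this
    have h3 : (3 : ZMod 3) = 0 := by decide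
    rw [h3, zero_mul, sub_zero] at h
    revert h
    have : ∀ a : ZMod 3, (16 : ZMod 3) * a ^ 2 ≠ -1 := by decide
    exact this _
end

section
/- Let p be an odd prime number such that 2^{p−1} ≡ 1 (mod p^2). Then there exists at least one prime factor q1 of p − 2 such that q1^{p−1} ≢ 1 (mod p^2). -/
/-!
Modulo `p²` the binomial expansion gives
`(p - 2)^(p-1) = ((-2) + p)^(p-1) ≡ 2^(p-1) - (p - 1)·p·(-2)^(p-2)`, and the correction term is
not divisible by `p²` since `p` divides neither `p - 1` nor `2`. Hence `(p - 2)^(p-1) ≢ 2^(p-1) ≡ 1`,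
and as `n ↦ n^(p-1) mod p²` is multiplicative, some prime factor of `p - 2` must already fail.
-/

theorem Nat.pow_modEq_one_of_forall_prime_dvd {n k m : ℕ} (hn : n ≠ 0)
    (h : ∀ q, q.Prime → q ∣ n → q ^ k ≡ 1 [MOD m]) : n ^ k ≡ 1 [MOD m] := by
  induction n using induction_on_primes with
  | zero => exact absurd rfl hn
  | one => rw [one_pow]
  | prime_mul q a hq ih =>
    rw [mul_pow, ← one_mul 1]
    exact (h q hq (dvd_mul_right q a)).mul
      (ih (right_ne_zero_of_mul hn) fun r hr hra => h r hr (hra.mul_left q))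

theorem Int.not_pow_modEq_pow_of_add_eq {p : ℕ} (hp : p.Prime) (hodd : Odd p) {a b : ℤ}
    (hab : a + b = p) (ha : ¬ (p : ℤ) ∣ a) : ¬ a ^ (p - 1) ≡ b ^ (p - 1) [ZMOD p ^ 2] := by
  intro hmod
  have hp' : Prime (p : ℤ) := Nat.prime_iff_prime_int.mp hp
  have hbinom := sq_dvd_add_pow_sub_sub (p : ℤ) (-a) (p - 1)
  rw [show -a + p = b by linarith, (hodd.tsub_odd odd_one).neg_pow] at hbinom
  rw [sq] at hbinom hmod
  have hsq : (p : ℤ) * p ∣ p * ((-a) ^ (p - 1 - 1) * (p - 1 : ℕ)) :=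
    (hmod.dvd.sub hbinom).trans (dvd_of_eq (by ring))
  rcases hp'.dvd_or_dvd (Int.dvd_of_mul_dvd_mul_left (by exact_mod_cast hp.ne_zero) hsq) with h | h
  · exact ha (dvd_neg.mp (hp'.dvd_of_dvd_pow h))
  · have := hp.two_le
    have := Nat.eq_zero_of_dvd_of_lt (Int.natCast_dvd_natCast.mp h) (by omega)
    omega

/-- Let `p` be an odd prime number such that `2^(p−1) ≡ 1 (mod p^2)`. Then there exists at
least one prime factor `q1` of `p − 2` such that `q1^(p−1) ≢ 1 (mod p^2)`. -/
theorem stmt_19 (p : ℕ) (hp : p.Prime) (hodd : Odd p)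
    (hw : 2 ^ (p - 1) ≡ 1 [MOD p ^ 2]) :
    ∃ q1 : ℕ, q1.Prime ∧ q1 ∣ p - 2 ∧ ¬ (q1 ^ (p - 1) ≡ 1 [MOD p ^ 2]) := by
  by_contra! hcon
  have hp2 : p ≠ 2 := by rintro rfl; exact absurd hodd (by decide)
  have hp3 : 3 ≤ p := by have := hp.two_le; omega
  have hpow : (p - 2) ^ (p - 1) ≡ 1 [MOD p ^ 2] :=
    Nat.pow_modEq_one_of_forall_prime_dvd (by omega) hcon
  refine Int.not_pow_modEq_pow_of_add_eq hp hodd (a := 2) (b := ((p - 2 : ℕ) : ℤ))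
    (by omega) ?_ ?_
  · exact fun h => hp2 ((Nat.prime_dvd_prime_iff_eq hp Nat.prime_two).mp (by exact_mod_cast h))
  · exact_mod_cast Int.natCast_modEq_iff.mpr (hw.trans hpow.symm)
end
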